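/- Let L be an upwards complete ordered set and let m ∈ L be a maximal noncompact element (m is not compact and every x > m is compact). Then the up-set [m) = { x ∈ L : x ≥ m } satisfies the ascending chain condition: there is no strictly increasing sequence m ≤ x₀ < x₁ < x₂ < … in L. -/

import Mathlib

universe u

/-- A subset is directed if every finite subset has an upper bound in it. -/
def IsDirectedSet {α : Type u} [PartialOrder α] (X : Set α) : Prop :=
  ∀ F : Finset α, ↑F ⊆ X → ∃ z ∈ X, ∀ x ∈ F, x ≤ z

/-- An element is compact if whenever it is below the supremum of a directed set,
it is below some member of the set. -/
def IsCompactElem {α : Type u} [PartialOrder α] (k : α) : Prop :=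
  ∀ X : Set α, IsDirectedSet X → ∀ s : α, IsLUB X s → k ≤ s → ∃ x ∈ X, k ≤ x

/-- An ordered set is upwards complete if every directed subset has a supremum. -/
def UpwardsComplete (α : Type u) [PartialOrder α] : Prop :=
  ∀ X : Set α, IsDirectedSet X → ∃ s : α, IsLUB X s

/-- An ordered set is algebraic if it is upwards complete and every element is the
supremum of the directed set of compact elements below it. -/
def IsAlgebraicOrder (α : Type u) [PartialOrder α] : Prop :=
  UpwardsComplete α ∧ ∀ x : α,
    IsDirectedSet {k : α | IsCompactElem k ∧ k ≤ x} ∧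
    IsLUB {k : α | IsCompactElem k ∧ k ≤ x} x

/-- The iterated poset of compact elements: `KIter α inst n` is `Kⁿ(α)` with its
induced partial order. -/
def KIter (α : Type u) (inst : PartialOrder α) : ℕ → (β : Type u) × PartialOrder β
  | 0 => ⟨α, inst⟩
  | n + 1 =>
    let p := KIter α inst n
    ⟨{x : p.1 // @IsCompactElem p.1 p.2 x}, @Subtype.partialOrder p.1 p.2 _⟩

/-- An ordered set is iteratively algebraic if `Kⁿ(α)` is algebraic for all `n`. -/
def IterativelyAlgebraic (α : Type u) (inst : PartialOrder α) : Prop :=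
  ∀ n : ℕ, @IsAlgebraicOrder (KIter α inst n).1 (KIter α inst n).2

/-! The supremum of a strictly increasing sequence starting above `m` lies strictly above `m`,
so it is compact; a compact supremum of a directed set is attained in it, which a strictly
increasing sequence cannot do. -/

theorem isDirectedSet_range_of_monotone {ι : Type*} [Preorder ι] [IsDirectedOrder ι]
    [Nonempty ι] {α : Type u} [PartialOrder α] {f : ι → α} (hf : Monotone f) :
    IsDirectedSet (Set.range f) := by
  intro F hF
  choose g hg using fun a : F => hF a.2
  obtain ⟨i, hi⟩ := Finite.exists_le g
  exact ⟨f i, ⟨i, rfl⟩, fun a ha => (hg ⟨a, ha⟩).ge.trans (hf (hi ⟨a, ha⟩))⟩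

theorem IsCompactElem.mem_of_isLUB {α : Type u} [PartialOrder α] {X : Set α} {s : α}
    (hs : IsCompactElem s) (hX : IsDirectedSet X) (hsX : IsLUB X s) : s ∈ X := by
  obtain ⟨x, hx, hsx⟩ := hs X hX s hsX le_rfl
  rwa [le_antisymm hsx (hsX.1 hx)]

theorem upSet_of_maximal_noncompact_acc_general {α : Type u} [PartialOrder α]
    (hL : UpwardsComplete α) (m : α)
    (hmax : ∀ x : α, m < x → IsCompactElem x) :
    ¬ ∃ x : ℕ → α, m ≤ x 0 ∧ ∀ n : ℕ, x n < x (n + 1) := by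
  rintro ⟨x, hx0, hx⟩
  have hdir := isDirectedSet_range_of_monotone (strictMono_nat_of_lt_succ hx).monotone
  obtain ⟨s, hs⟩ := hL _ hdir
  have hms : m < s := hx0.trans_lt ((hx 0).trans_le (hs.1 ⟨1, rfl⟩))
  obtain ⟨n, rfl⟩ := (hmax s hms).mem_of_isLUB hdir hs
  exact (hx n).not_ge (hs.1 ⟨n + 1, rfl⟩)

/-- In an upwards complete ordered set, the up-set of a maximal noncompact element
satisfies the ascending chain condition. -/
theorem upSet_of_maximal_noncompact_acc {α : Type u} [PartialOrder α]
    (hL : UpwardsComplete α) (m : α) (hm : ¬ IsCompactElem m)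
    (hmax : ∀ x : α, m < x → IsCompactElem x) :
    ¬ ∃ x : ℕ → α, m ≤ x 0 ∧ ∀ n : ℕ, x n < x (n + 1) :=
  upSet_of_maximal_noncompact_acc_general hL m hmax
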